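/- arXiv:1910.05505 — 7 statements merged into one kernel-verified Lean document; each statement's English description precedes it below -/
import Mathlib

section
/- If W_1, ..., W_N are matrices with W_j ∈ ℝ^{d_j × d_{j-1}} satisfying the balancedness conditions W_{j+1}^T W_{j+1} = W_j W_j^T for all j = 1, ..., N-1, then the product W = W_N ⋯ W_1 satisfies W W^T = (W_N W_N^T)^N and W^T W = (W_1^T W_1)^N. -/
open Matrix

/-- Cast a matrix along equalities of its (Fin) dimensions. -/
def mcast {a b c e : ℕ} (h1 : a = b) (h2 : c = e) (M : Matrix (Fin a) (Fin c) ℝ) :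
    Matrix (Fin b) (Fin e) ℝ :=
  M.submatrix (Fin.cast h1.symm) (Fin.cast h2.symm)

/-- The product W_{a+k} ⋯ W_{a+1} of `k` consecutive layer matrices starting at layer `a`
(in 0-based indexing, `W i` maps ℝ^{d i} to ℝ^{d (i+1)}). -/
def segProd (d : ℕ → ℕ) (W : ∀ i : ℕ, Matrix (Fin (d (i + 1))) (Fin (d i)) ℝ) (a : ℕ) :
    (k : ℕ) → Matrix (Fin (d (a + k))) (Fin (d a)) ℝ
  | 0 => (1 : Matrix (Fin (d a)) (Fin (d a)) ℝ)
  | (k + 1) => W (a + k) * segProd d W a k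

lemma mcast_self {a c : ℕ} (h1 : a = a) (h2 : c = c) (M : Matrix (Fin a) (Fin c) ℝ) :
    mcast h1 h2 M = M := by
  simp [mcast]

lemma mcast_mul {a₁ a₂ a₃ b₁ b₂ b₃ : ℕ} (h1 : a₁ = b₁) (h2 : a₂ = b₂) (h3 : a₃ = b₃)
    (A : Matrix (Fin a₁) (Fin a₂) ℝ) (B : Matrix (Fin a₂) (Fin a₃) ℝ) :
    mcast h1 h2 A * mcast h2 h3 B = mcast h1 h3 (A * B) := by
  subst h1; subst h2; subst h3
  rw [mcast_self, mcast_self, mcast_self]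

lemma mcast_transpose {a b c e : ℕ} (h1 : a = b) (h2 : c = e) (M : Matrix (Fin a) (Fin c) ℝ) :
    (mcast h1 h2 M)ᵀ = mcast h2 h1 Mᵀ := by
  subst h1; subst h2
  rw [mcast_self, mcast_self]

lemma pow_shift (d : ℕ → ℕ) (W : ∀ i : ℕ, Matrix (Fin (d (i + 1))) (Fin (d i)) ℝ)
    {i j : ℕ} (hij : i = j) (n : ℕ) (h1 : d (i + 1) = d (j + 1)) :
    mcast h1 h1 ((W i * (W i)ᵀ) ^ n) = (W j * (W j)ᵀ) ^ n := by
  subst hij; rw [mcast_self]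

lemma semic {p q : Type*} [Fintype p] [Fintype q] [DecidableEq p] [DecidableEq q]
    (B : Matrix p q ℝ) (n : ℕ) : B * (Bᵀ * B) ^ n = (B * Bᵀ) ^ n * B := by
  induction n with
  | zero => simp
  | succ n ih =>
    rw [pow_succ, pow_succ, ← Matrix.mul_assoc, ih, Matrix.mul_assoc, Matrix.mul_assoc,
      Matrix.mul_assoc]

lemma lemA (d : ℕ → ℕ) (W : ∀ i : ℕ, Matrix (Fin (d (i + 1))) (Fin (d i)) ℝ) (a : ℕ) :
    ∀ k, (∀ j, j + 1 < a + k + 1 → (W (j + 1))ᵀ * W (j + 1) = W j * (W j)ᵀ) →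
      segProd d W a (k + 1) * (segProd d W a (k + 1))ᵀ = (W (a + k) * (W (a + k))ᵀ) ^ (k + 1) := by
  intro k
  induction k with
  | zero => intro _; simp [segProd, pow_one]
  | succ k ih =>
    intro hb
    have ihk := ih (fun j hj => hb j (by omega))
    have hbal : (W (a + (k + 1)))ᵀ * W (a + (k + 1)) = W (a + k) * (W (a + k))ᵀ :=
      hb (a + k) (by omega)
    rw [show segProd d W a (k + 1 + 1) = W (a + (k + 1)) * segProd d W a (k + 1) from rfl]
    set B := W (a + (k + 1)) with hB
    set P := segProd d W a (k + 1) with hP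
    have h1 : P * Pᵀ = (Bᵀ * B) ^ (k + 1) := by rw [ihk, ← hbal]
    calc B * P * (B * P)ᵀ = B * (P * Pᵀ) * Bᵀ := by
          rw [transpose_mul, ← Matrix.mul_assoc, Matrix.mul_assoc B P]
      _ = B * (Bᵀ * B) ^ (k + 1) * Bᵀ := by rw [h1]
      _ = (B * Bᵀ) ^ (k + 1) * B * Bᵀ := by rw [semic]
      _ = (B * Bᵀ) ^ (k + 1 + 1) := by rw [Matrix.mul_assoc, ← pow_succ]

lemma lemC (d : ℕ → ℕ) (W : ∀ i : ℕ, Matrix (Fin (d (i + 1))) (Fin (d i)) ℝ) (a : ℕ) :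
    ∀ k, (∀ j, j + 1 < a + k + 1 → (W (j + 1))ᵀ * W (j + 1) = W j * (W j)ᵀ) →
      ((W (a + k))ᵀ * W (a + k)) * segProd d W a k =
        segProd d W a k * ((W a)ᵀ * W a) := by
  intro k
  induction k with
  | zero => intro _; simp [segProd]
  | succ k ih =>
    intro hb
    have ihs := ih (fun j hj => hb j (by omega))
    have hbal : (W (a + (k + 1)))ᵀ * W (a + (k + 1)) = W (a + k) * (W (a + k))ᵀ :=
      hb (a + k) (by omega)
    calc (W (a + (k + 1)))ᵀ * W (a + (k + 1)) * segProd d W a (k + 1)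
        = (W (a + k) * (W (a + k))ᵀ) * (W (a + k) * segProd d W a k) := by rw [hbal]; exact rfl
      _ = W (a + k) * (((W (a + k))ᵀ * W (a + k)) * segProd d W a k) := by
          rw [Matrix.mul_assoc, ← Matrix.mul_assoc (W (a + k))ᵀ]
      _ = W (a + k) * (segProd d W a k * ((W a)ᵀ * W a)) := by rw [ihs]
      _ = (W (a + k) * segProd d W a k) * ((W a)ᵀ * W a) := by rw [Matrix.mul_assoc]
      _ = segProd d W a (k + 1) * ((W a)ᵀ * W a) := rfl

lemma lemB (d : ℕ → ℕ) (W : ∀ i : ℕ, Matrix (Fin (d (i + 1))) (Fin (d i)) ℝ) (a : ℕ) :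
    ∀ k, (∀ j, j + 1 < a + k → (W (j + 1))ᵀ * W (j + 1) = W j * (W j)ᵀ) →
      (segProd d W a k)ᵀ * segProd d W a k = ((W a)ᵀ * W a) ^ k := by
  intro k
  induction k with
  | zero => intro _; simp [segProd]
  | succ k ih =>
    intro hb
    have ihp := ih (fun j hj => hb j (by omega))
    have ihs := lemC d W a k (fun j hj => hb j (by omega))
    rw [show segProd d W a (k + 1) = W (a + k) * segProd d W a k from rfl]
    set A := W (a + k) with hA
    set Q := segProd d W a k with hQ
    set C := (W a)ᵀ * W a with hC
    calc (A * Q)ᵀ * (A * Q) = Qᵀ * ((Aᵀ * A) * Q) := by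
          rw [transpose_mul, Matrix.mul_assoc, ← Matrix.mul_assoc Aᵀ]
      _ = Qᵀ * (Q * C) := by rw [ihs]
      _ = (Qᵀ * Q) * C := by rw [← Matrix.mul_assoc]
      _ = C ^ (k + 1) := by rw [ihp, ← pow_succ]

/-- Under balancedness, W Wᵀ = (W_N W_Nᵀ)^N and Wᵀ W = (W_1ᵀ W_1)^N for W = W_N ⋯ W_1. -/
theorem stmt0 (N : ℕ) (hN : 2 ≤ N) (d : ℕ → ℕ)
    (W : ∀ i : ℕ, Matrix (Fin (d (i + 1))) (Fin (d i)) ℝ)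
    (hbal : ∀ j, j + 1 < N → (W (j + 1))ᵀ * W (j + 1) = W j * (W j)ᵀ) :
    (mcast (congrArg d (Nat.zero_add N)) rfl (segProd d W 0 N)) *
        (mcast (congrArg d (Nat.zero_add N)) rfl (segProd d W 0 N))ᵀ =
      (mcast (congrArg d (by omega : N - 1 + 1 = N)) (congrArg d (by omega : N - 1 + 1 = N))
          (W (N - 1) * (W (N - 1))ᵀ)) ^ N ∧
    (mcast (congrArg d (Nat.zero_add N)) rfl (segProd d W 0 N))ᵀ *
        mcast (congrArg d (Nat.zero_add N)) rfl (segProd d W 0 N) =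
      ((W 0)ᵀ * W 0) ^ N := by
  constructor
  · obtain ⟨m, rfl⟩ : ∃ m, N = m + 1 := ⟨N - 1, by omega⟩
    have hA := lemA d W 0 m (fun j hj => hbal j (by omega))
    rw [mcast_transpose, mcast_mul, hA]
    exact (pow_shift d W (Nat.zero_add m) (m + 1)
      (congrArg d (congrArg (· + 1) (Nat.zero_add m)))).trans rfl
  · have hB := lemB d W 0 N (fun j hj => hbal j (by omega))
    rw [mcast_transpose, mcast_mul, mcast_self, hB]
end

section
/- If W_1(t), ..., W_N(t) solve the gradient flow dW_j/dt = -∇_{W_j} L^N(W_1,...,W_N), then for all j = 1, ..., N-1 and all t, d/dt (W_{j+1}^T(t) W_{j+1}(t)) = d/dt (W_j(t) W_j^T(t)); in particular the differences W_{j+1}^T(t) W_{j+1}(t) - W_j(t) W_j^T(t) are constant in time. -/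
open Matrix

/-- The full product W = W_N ⋯ W_1 of all `N` layers. -/
def netProd (N : ℕ) (d : ℕ → ℕ) (W : ∀ i : ℕ, Matrix (Fin (d (i + 1))) (Fin (d i)) ℝ) :
    Matrix (Fin (d N)) (Fin (d 0)) ℝ :=
  mcast (congrArg d (Nat.zero_add N)) rfl (segProd d W 0 N)

/-- L^N(W_1,…,W_N) = (1/2) ‖Y - W_N⋯W_1 X‖_F². -/
noncomputable def LN (N : ℕ) (d : ℕ → ℕ) (m : ℕ)
    (X : Matrix (Fin (d 0)) (Fin m) ℝ) (Y : Matrix (Fin (d N)) (Fin m) ℝ)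
    (W : ∀ i : ℕ, Matrix (Fin (d (i + 1))) (Fin (d i)) ℝ) : ℝ :=
  (1 / 2) * Matrix.trace ((Y - netProd N d W * X) * (Y - netProd N d W * X)ᵀ)

/-- The claimed gradient ∇_{W_{j+1}} L^N = W_{j+2}ᵀ⋯W_Nᵀ (W X Xᵀ - Y Xᵀ) W_1ᵀ⋯W_jᵀ
(0-based index `j`). -/
noncomputable def gradLN (N : ℕ) (d : ℕ → ℕ) (m : ℕ)
    (X : Matrix (Fin (d 0)) (Fin m) ℝ) (Y : Matrix (Fin (d N)) (Fin m) ℝ)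
    (W : ∀ i : ℕ, Matrix (Fin (d (i + 1))) (Fin (d i)) ℝ) (j : ℕ) (hj : j < N) :
    Matrix (Fin (d (j + 1))) (Fin (d j)) ℝ :=
  (mcast (congrArg d (by omega : (j + 1) + (N - (j + 1)) = N)) rfl
      (segProd d W (j + 1) (N - (j + 1))))ᵀ *
    (netProd N d W * X * Xᵀ - Y * Xᵀ) *
    (mcast (congrArg d (Nat.zero_add j)) rfl (segProd d W 0 j))ᵀ

/-!
Write `G_j` for the gradient of `L^N` in the layer `W_j`. Since `G_j` is the residual
`W X Xᵀ - Y Xᵀ` sandwiched between the transposed products of the layers above and below `W_j`,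
peeling one layer off each product gives `W_{j+1}ᵀ G_{j+1} = G_j W_jᵀ`. Along the flow the
derivatives of `W_{j+1}ᵀ W_{j+1}` and `W_j W_jᵀ` are `-(G_{j+1}ᵀ W_{j+1} + W_{j+1}ᵀ G_{j+1})`
and `-(G_j W_jᵀ + W_j G_jᵀ)`, which agree by this identity and its transpose; so their
difference has zero derivative.
-/

section Cast

variable {d : ℕ → ℕ}

@[simp]
lemma mcast_refl {a c : ℕ} (M : Matrix (Fin a) (Fin c) ℝ) : mcast rfl rfl M = M := rfl

lemma mcast_mul_s2 {a b c e f g : ℕ} (h₁ : a = b) (h₂ : c = e) (h₃ : f = g)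
    (M : Matrix (Fin a) (Fin c) ℝ) (P : Matrix (Fin c) (Fin f) ℝ) :
    mcast h₁ h₃ (M * P) = mcast h₁ h₂ M * mcast h₂ h₃ P := by
  subst h₁ h₂ h₃; rfl

lemma mcast_mcast {a b c e f g : ℕ} (h₁ : a = b) (h₂ : c = e) (h₃ : b = f) (h₄ : e = g)
    (M : Matrix (Fin a) (Fin c) ℝ) :
    mcast h₃ h₄ (mcast h₁ h₂ M) = mcast (h₁.trans h₃) (h₂.trans h₄) M := by
  subst h₁ h₂ h₃ h₄; rfl

lemma mcast_layer (V : ∀ i : ℕ, Matrix (Fin (d (i + 1))) (Fin (d i)) ℝ) {i i' : ℕ} (h : i = i')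
    (h₁ : d (i + 1) = d (i' + 1)) (h₂ : d i = d i') :
    mcast h₁ h₂ (V i) = V i' := by
  subst h; rfl

lemma mcast_segProd_of_length_eq (V : ∀ i : ℕ, Matrix (Fin (d (i + 1))) (Fin (d i)) ℝ) (a : ℕ)
    {k k' : ℕ} (h : k = k') (h₁ : d (a + k) = d (a + k')) :
    mcast h₁ rfl (segProd d V a k) = segProd d V a k' := by
  subst h; rfl

end Cast

section SegProd

variable {d : ℕ → ℕ} (V : ∀ i : ℕ, Matrix (Fin (d (i + 1))) (Fin (d i)) ℝ)

lemma segProd_succ_eq_mul_layer (a : ℕ) :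
    ∀ (k : ℕ) (h : d (a + 1 + k) = d (a + (k + 1))),
      segProd d V a (k + 1) = mcast h rfl (segProd d V (a + 1) k) * V a
  | 0, h => by
    change V a * 1 = 1 * V a
    rw [Matrix.mul_one, Matrix.one_mul]
  | k + 1, h => by
    change V (a + (k + 1)) * segProd d V a (k + 1) = mcast h rfl (V (a + 1 + k) * _) * V a
    rw [segProd_succ_eq_mul_layer a k (congrArg d (by omega)),
      mcast_mul_s2 h (congrArg d (by omega : a + 1 + k = a + (k + 1))) rfl,
      mcast_layer V (by omega : a + 1 + k = a + k + 1), ← Matrix.mul_assoc]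
    rfl

lemma mcast_segProd_zero_succ (j : ℕ) (h₁ : d (0 + (j + 1)) = d (j + 1)) (h₂ : d (0 + j) = d j) :
    mcast h₁ rfl (segProd d V 0 (j + 1)) = V j * mcast h₂ rfl (segProd d V 0 j) := by
  change mcast h₁ rfl (V (0 + j) * segProd d V 0 j) = _
  rw [mcast_mul_s2 h₁ h₂ rfl, mcast_layer V (Nat.zero_add j)]

lemma mcast_segProd_succ_eq_mul_layer {N : ℕ} (j : ℕ) (hj : j + 2 ≤ N)
    (h₁ : d (j + 1 + (N - (j + 1))) = d N) (h₂ : d (j + 2 + (N - (j + 2))) = d N) :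
    mcast h₁ rfl (segProd d V (j + 1) (N - (j + 1))) =
      mcast h₂ rfl (segProd d V (j + 2) (N - (j + 2))) * V (j + 1) := by
  rw [← mcast_segProd_of_length_eq V (j + 1) (by omega : N - (j + 2) + 1 = N - (j + 1))
      (congrArg d (by omega)), mcast_mcast,
    segProd_succ_eq_mul_layer V (j + 1) (N - (j + 2)) (congrArg d (by omega)),
    mcast_mul_s2 _ rfl rfl, mcast_mcast, mcast_refl]

theorem transpose_mul_gradLN_succ (N m : ℕ) (X : Matrix (Fin (d 0)) (Fin m) ℝ)
    (Y : Matrix (Fin (d N)) (Fin m) ℝ) (j : ℕ) (hj : j + 1 < N) :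
    (V (j + 1))ᵀ * gradLN N d m X Y V (j + 1) hj =
      gradLN N d m X Y V j (by omega) * (V j)ᵀ := by
  rw [gradLN, gradLN, mcast_segProd_succ_eq_mul_layer V j hj _ (congrArg d (by omega)),
    mcast_segProd_zero_succ V j _ (congrArg d (Nat.zero_add j))]
  simp only [Matrix.transpose_mul, Matrix.mul_assoc]

end SegProd

section Calculus

variable {l n p : Type*} [Fintype n]

theorem hasDerivAt_matrix_mul_apply {A : ℝ → Matrix l n ℝ} {B : ℝ → Matrix n p ℝ}
    {A' : Matrix l n ℝ} {B' : Matrix n p ℝ} {t : ℝ}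
    (hA : ∀ i k, HasDerivAt (fun s => A s i k) (A' i k) t)
    (hB : ∀ k r, HasDerivAt (fun s => B s k r) (B' k r) t) (i : l) (r : p) :
    HasDerivAt (fun s => (A s * B s) i r) ((A' * B t + A t * B') i r) t := by
  simp only [Matrix.mul_apply, Matrix.add_apply, ← Finset.sum_add_distrib]
  exact HasDerivAt.fun_sum fun k _ => (hA i k).fun_mul (hB k r)

theorem hasDerivAt_transpose_mul_self_apply {A : ℝ → Matrix n l ℝ} {A' : Matrix n l ℝ} {t : ℝ}
    (hA : ∀ i k, HasDerivAt (fun s => A s i k) (A' i k) t) (i k : l) :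
    HasDerivAt (fun s => ((A s)ᵀ * A s) i k) ((A'ᵀ * A t + (A t)ᵀ * A') i k) t :=
  hasDerivAt_matrix_mul_apply (fun i k => hA k i) hA i k

theorem hasDerivAt_mul_transpose_self_apply {A : ℝ → Matrix l n ℝ} {A' : Matrix l n ℝ} {t : ℝ}
    (hA : ∀ i k, HasDerivAt (fun s => A s i k) (A' i k) t) (i k : l) :
    HasDerivAt (fun s => (A s * (A s)ᵀ) i k) ((A' * (A t)ᵀ + A t * A'ᵀ) i k) t :=
  hasDerivAt_matrix_mul_apply hA (fun i k => hA k i) i k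

theorem sub_eq_of_hasDerivAt_apply {F G D : ℝ → Matrix l p ℝ}
    (hF : ∀ t i k, HasDerivAt (fun s => F s i k) (D t i k) t)
    (hG : ∀ t i k, HasDerivAt (fun s => G s i k) (D t i k) t) (t t' : ℝ) :
    F t - G t = F t' - G t' := by
  ext i k
  have hzero : ∀ s, HasDerivAt (fun s => F s i k - G s i k) 0 s := fun s => by
    simpa using (hF s i k).fun_sub (hG s i k)
  exact is_const_of_deriv_eq_zero (fun s => (hzero s).differentiableAt)
    (fun s => (hzero s).deriv) t t'

end Calculus

theorem stmt2_general (N : ℕ) (d : ℕ → ℕ) (m : ℕ)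
    (X : Matrix (Fin (d 0)) (Fin m) ℝ) (Y : Matrix (Fin (d N)) (Fin m) ℝ)
    (W : ℝ → ∀ i : ℕ, Matrix (Fin (d (i + 1))) (Fin (d i)) ℝ)
    (hflow : ∀ (j : ℕ) (hj : j < N) (t : ℝ) (a : Fin (d (j + 1))) (b : Fin (d j)),
      HasDerivAt (fun s : ℝ => W s j a b) (-(gradLN N d m X Y (W t) j hj a b)) t) :
    ∀ (j : ℕ), j + 1 < N →
      (∀ t : ℝ, ∃ D : Matrix (Fin (d (j + 1))) (Fin (d (j + 1))) ℝ,
        (∀ a b, HasDerivAt (fun s : ℝ => ((W s (j + 1))ᵀ * W s (j + 1)) a b) (D a b) t) ∧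
        (∀ a b, HasDerivAt (fun s : ℝ => (W s j * (W s j)ᵀ) a b) (D a b) t)) ∧
      (∀ t : ℝ,
        (W t (j + 1))ᵀ * W t (j + 1) - W t j * (W t j)ᵀ =
          (W 0 (j + 1))ᵀ * W 0 (j + 1) - W 0 j * (W 0 j)ᵀ) := by
  intro j hj
  have hderiv : ∀ t : ℝ, ∃ D : Matrix (Fin (d (j + 1))) (Fin (d (j + 1))) ℝ,
      (∀ a b, HasDerivAt (fun s : ℝ => ((W s (j + 1))ᵀ * W s (j + 1)) a b) (D a b) t) ∧
      (∀ a b, HasDerivAt (fun s : ℝ => (W s j * (W s j)ᵀ) a b) (D a b) t) := by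
    intro t
    set G₁ := gradLN N d m X Y (W t) (j + 1) hj
    set G₀ := gradLN N d m X Y (W t) j (by omega)
    have key : (W t (j + 1))ᵀ * G₁ = G₀ * (W t j)ᵀ :=
      transpose_mul_gradLN_succ (W t) N m X Y j hj
    refine ⟨_, hasDerivAt_transpose_mul_self_apply (A' := -G₁) (hflow (j + 1) hj t), ?_⟩
    convert hasDerivAt_mul_transpose_self_apply (A' := -G₀) (hflow j _ t) using 3
    have key' : G₁ᵀ * W t (j + 1) = W t j * G₀ᵀ := by
      simpa only [Matrix.transpose_mul, Matrix.transpose_transpose] using congrArg transpose key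
    simp only [Matrix.transpose_neg, Matrix.neg_mul, Matrix.mul_neg, key, key', add_comm]
  choose D hD using hderiv
  exact ⟨fun t => ⟨D t, hD t⟩,
    fun t => sub_eq_of_hasDerivAt_apply (fun t => (hD t).1) (fun t => (hD t).2) t 0⟩

/-- Along the gradient flow dW_j/dt = -∇_{W_j} L^N (stated entrywise), for each j the
derivatives of W_{j+1}ᵀ W_{j+1} and W_j W_jᵀ coincide; in particular their difference is
constant in time. -/
theorem stmt2 (N : ℕ) (hN : 2 ≤ N) (d : ℕ → ℕ) (m : ℕ)
    (X : Matrix (Fin (d 0)) (Fin m) ℝ) (Y : Matrix (Fin (d N)) (Fin m) ℝ)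
    (W : ℝ → ∀ i : ℕ, Matrix (Fin (d (i + 1))) (Fin (d i)) ℝ)
    (hflow : ∀ (j : ℕ) (hj : j < N) (t : ℝ) (a : Fin (d (j + 1))) (b : Fin (d j)),
      HasDerivAt (fun s : ℝ => W s j a b) (-(gradLN N d m X Y (W t) j hj a b)) t) :
    ∀ (j : ℕ), j + 1 < N →
      (∀ t : ℝ, ∃ D : Matrix (Fin (d (j + 1))) (Fin (d (j + 1))) ℝ,
        (∀ a b, HasDerivAt (fun s : ℝ => ((W s (j + 1))ᵀ * W s (j + 1)) a b) (D a b) t) ∧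
        (∀ a b, HasDerivAt (fun s : ℝ => (W s j * (W s j)ᵀ) a b) (D a b) t)) ∧
      (∀ t : ℝ,
        (W t (j + 1))ᵀ * W t (j + 1) - W t j * (W t j)ᵀ =
          (W 0 (j + 1))ᵀ * W 0 (j + 1) - W 0 j * (W 0 j)ᵀ) :=
  stmt2_general N d m X Y W hflow
end

section
/- For every W ∈ ℝ^{d_y × d_x}, N ≥ 2, and every Z ∈ ℝ^{d_y × d_x}, one has ⟨A_W(Z), Z⟩_F ≥ 0, where A_W(Z) = ∑_{j=1}^N (W W^T)^{(N-j)/N} Z (W^T W)^{(j-1)/N}. -/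
/-!
Each summand of `⟨A_W(Z), Z⟩_F` has the form `tr(P Z Q Zᵀ)` with `P`, `Q` positive semidefinite
(real powers of the Gram matrices `W Wᵀ` and `Wᵀ W`). Writing `P = Bᵀ B`, cyclicity of the trace
turns it into `tr((B Z) Q (B Z)ᵀ)`, the trace of a positive semidefinite matrix.
-/

open Matrix

/-- The principal real power of a positive semidefinite (here: Hermitian) real matrix,
defined through its spectral decomposition: A^r = U diag(λᵢ^r) Uᵀ. -/
noncomputable def psdRpow {n : ℕ} {A : Matrix (Fin n) (Fin n) ℝ} (hA : A.IsHermitian) (r : ℝ) :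
    Matrix (Fin n) (Fin n) ℝ :=
  (hA.eigenvectorUnitary : Matrix (Fin n) (Fin n) ℝ) *
    Matrix.diagonal (fun i => (hA.eigenvalues i) ^ r) *
    (star (hA.eigenvectorUnitary : Matrix (Fin n) (Fin n) ℝ))

/-- The operator A_W(Z) = ∑_{j=1}^N (W Wᵀ)^{(N-j)/N} Z (Wᵀ W)^{(j-1)/N}. -/
noncomputable def AW {dy dx : ℕ} (N : ℕ) {W : Matrix (Fin dy) (Fin dx) ℝ}
    (h1 : (W * Wᵀ).IsHermitian) (h2 : (Wᵀ * W).IsHermitian)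
    (Z : Matrix (Fin dy) (Fin dx) ℝ) : Matrix (Fin dy) (Fin dx) ℝ :=
  ∑ j ∈ Finset.range N,
    psdRpow h1 (((N : ℝ) - 1 - (j : ℝ)) / (N : ℝ)) * Z * psdRpow h2 ((j : ℝ) / (N : ℝ))

open scoped ComplexOrder MatrixOrder

theorem Matrix.PosSemidef.trace_mul_mul_mul_conjTranspose_nonneg {𝕜 m n : Type*} [RCLike 𝕜]
    [Fintype m] [Fintype n] {P : Matrix m m 𝕜} {Q : Matrix n n 𝕜}
    (hP : P.PosSemidef) (hQ : Q.PosSemidef) (Z : Matrix m n 𝕜) :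
    0 ≤ (P * Z * Q * Zᴴ).trace := by
  classical
  obtain ⟨B, rfl⟩ := CStarAlgebra.nonneg_iff_eq_star_mul_self.mp hP.nonneg
  rw [star_eq_conjTranspose, show Bᴴ * B * Z * Q * Zᴴ = Bᴴ * (B * Z * Q * Zᴴ) by
    simp only [Matrix.mul_assoc], trace_mul_comm]
  simpa only [conjTranspose_mul, Matrix.mul_assoc] using
    (hQ.mul_mul_conjTranspose_same (B * Z)).trace_nonneg

theorem posSemidef_psdRpow {n : ℕ} {A : Matrix (Fin n) (Fin n) ℝ} (hA : A.PosSemidef) (r : ℝ) :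
    (psdRpow hA.isHermitian r).PosSemidef :=
  PosSemidef.mul_mul_conjTranspose_same
    (posSemidef_diagonal_iff.mpr fun i => Real.rpow_nonneg (hA.eigenvalues_nonneg i) r) _

theorem stmt7_general {dy dx : ℕ} (N : ℕ) (W : Matrix (Fin dy) (Fin dx) ℝ)
    (h1 : (W * Wᵀ).IsHermitian) (h2 : (Wᵀ * W).IsHermitian)
    (Z : Matrix (Fin dy) (Fin dx) ℝ) :
    0 ≤ Matrix.trace (AW N h1 h2 Z * Zᵀ) := by
  have hWWt : (W * Wᵀ).PosSemidef := by simpa using posSemidef_self_mul_conjTranspose W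
  have hWtW : (Wᵀ * W).PosSemidef := by simpa using posSemidef_conjTranspose_mul_self W
  rw [AW, Matrix.sum_mul, trace_sum]
  refine Finset.sum_nonneg fun j _ => ?_
  simpa using (posSemidef_psdRpow hWWt _).trace_mul_mul_mul_conjTranspose_nonneg
    (posSemidef_psdRpow hWtW _) Z

/-- ⟨A_W(Z), Z⟩_F ≥ 0 for every Z. -/
theorem stmt7 {dy dx : ℕ} (N : ℕ) (hN : 2 ≤ N) (W : Matrix (Fin dy) (Fin dx) ℝ)
    (h1 : (W * Wᵀ).IsHermitian) (h2 : (Wᵀ * W).IsHermitian)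
    (Z : Matrix (Fin dy) (Fin dx) ℝ) :
    0 ≤ Matrix.trace (AW N h1 h2 Z * Zᵀ) :=
  stmt7_general N W h1 h2 Z
end

section
/- Let W ∈ ℝ^{d_y × d_x} have rank k and let Z ∈ T_W M_k = {W A + B W}. If ⟨A_W(Z), Z⟩_F = 0, where A_W(Z) = ∑_{j=1}^N (W W^T)^{(N-j)/N} Z (W^T W)^{(j-1)/N} and N ≥ 2, then Z = 0. In other words the restriction of A_W to the tangent space T_W M_k is positive definite. -/
open Matrix

section helpers
variable {n : ℕ} {A : Matrix (Fin n) (Fin n) ℝ} (hA : A.IsHermitian)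

lemma psdRpow_transpose (r : ℝ) : (psdRpow hA r)ᵀ = psdRpow hA r := by
  rw [← conjTranspose_eq_transpose_of_trivial]
  simp [psdRpow, conjTranspose_mul, Matrix.mul_assoc, star_eq_conjTranspose,
    diagonal_conjTranspose]

lemma psdRpow_mul (r s : ℝ)
    (h : ∀ i, (hA.eigenvalues i) ^ r * (hA.eigenvalues i) ^ s = (hA.eigenvalues i) ^ (r + s)) :
    psdRpow hA r * psdRpow hA s = psdRpow hA (r + s) := by
  have hU : (star (hA.eigenvectorUnitary : Matrix (Fin n) (Fin n) ℝ)) *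
      (hA.eigenvectorUnitary : Matrix (Fin n) (Fin n) ℝ) = 1 := by
    simpa using (Matrix.mem_unitaryGroup_iff').mp (hA.eigenvectorUnitary).2
  simp only [psdRpow, Matrix.mul_assoc]
  rw [← Matrix.mul_assoc (star _) _, hU, Matrix.one_mul, ← Matrix.mul_assoc (diagonal _),
    diagonal_mul_diagonal]
  rw [funext h]

lemma psdRpow_zero : psdRpow hA 0 = 1 := by
  have hU : (hA.eigenvectorUnitary : Matrix (Fin n) (Fin n) ℝ) *
      (star (hA.eigenvectorUnitary : Matrix (Fin n) (Fin n) ℝ)) = 1 := by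
    simpa using (Matrix.mem_unitaryGroup_iff).mp (hA.eigenvectorUnitary).2
  simp [psdRpow, hU]

lemma psdRpow_one : psdRpow hA 1 = A := by
  conv_rhs => rw [hA.spectral_theorem]
  simp [psdRpow]

lemma psdRpow_add_of_nonneg (hev : ∀ i, 0 ≤ hA.eigenvalues i) {r s : ℝ}
    (hr : 0 ≤ r) (hs : 0 ≤ s) :
    psdRpow hA r * psdRpow hA s = psdRpow hA (r + s) :=
  psdRpow_mul hA r s fun i => (Real.rpow_add_of_nonneg (hev i) hr hs).symm

lemma psdRpow_half_mul_half (hev : ∀ i, 0 ≤ hA.eigenvalues i) {r : ℝ} (hr : 0 ≤ r) :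
    psdRpow hA (r / 2) * psdRpow hA (r / 2) = psdRpow hA r := by
  rw [psdRpow_add_of_nonneg hA hev (by linarith) (by linarith)]
  norm_num

end helpers

lemma trace_mul_transpose_self_nonneg {m n : ℕ} (M : Matrix (Fin m) (Fin n) ℝ) :
    0 ≤ Matrix.trace (M * Mᵀ) := by
  have h : Matrix.trace (M * Mᵀ) = ∑ i, ∑ j, (M i j) ^ 2 := by
    simp [Matrix.trace, Matrix.mul_apply, Matrix.diag, sq]
  rw [h]
  positivity

lemma eq_zero_of_trace_mul_transpose_self {m n : ℕ} {M : Matrix (Fin m) (Fin n) ℝ}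
    (h : Matrix.trace (M * Mᵀ) = 0) : M = 0 := by
  have h' : ∑ i, ∑ j, (M i j) ^ 2 = 0 := by
    rw [← h]; simp [Matrix.trace, Matrix.mul_apply, Matrix.diag, sq]
  ext i j
  have h1 : ∀ i ∈ Finset.univ, (0:ℝ) ≤ ∑ j, (M i j) ^ 2 := fun i _ => by positivity
  have h2 := (Finset.sum_eq_zero_iff_of_nonneg h1).mp h' i (Finset.mem_univ i)
  have h3 : ∀ j ∈ Finset.univ, (0:ℝ) ≤ (M i j) ^ 2 := fun j _ => by positivity
  have h4 := (Finset.sum_eq_zero_iff_of_nonneg h3).mp h2 j (Finset.mem_univ j)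
  simpa using pow_eq_zero_iff (n := 2) (by norm_num) |>.mp h4


/-- On the tangent space T_W M_k = {W A + B W}, the quadratic form of A_W is positive
definite: if ⟨A_W(Z), Z⟩_F = 0 for a tangent vector Z, then Z = 0. -/
theorem stmt9 {dy dx : ℕ} (N : ℕ) (hN : 2 ≤ N) (k : ℕ)
    (W : Matrix (Fin dy) (Fin dx) ℝ) (hk : W.rank = k)
    (h1 : (W * Wᵀ).IsHermitian) (h2 : (Wᵀ * W).IsHermitian)
    (Z : Matrix (Fin dy) (Fin dx) ℝ)
    (A : Matrix (Fin dx) (Fin dx) ℝ) (B : Matrix (Fin dy) (Fin dy) ℝ)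
    (hZ : Z = W * A + B * W)
    (h0 : Matrix.trace (AW N h1 h2 Z * Zᵀ) = 0) :
    Z = 0 := by
  have hpsd1 : (W * Wᵀ).PosSemidef := by
    have := Matrix.posSemidef_self_mul_conjTranspose W
    rwa [conjTranspose_eq_transpose_of_trivial] at this
  have hpsd2 : (Wᵀ * W).PosSemidef := by
    have := Matrix.posSemidef_self_mul_conjTranspose Wᵀ
    rwa [conjTranspose_eq_transpose_of_trivial, transpose_transpose] at this
  have hev1 : ∀ i, 0 ≤ h1.eigenvalues i := fun i => hpsd1.eigenvalues_nonneg i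
  have hev2 : ∀ i, 0 ≤ h2.eigenvalues i := fun i => hpsd2.eigenvalues_nonneg i
  have hNR : (1:ℝ) ≤ (N:ℝ) := by exact_mod_cast Nat.one_le_of_lt hN
  have hNpos : (0:ℝ) < (N:ℝ) := by linarith
  set a : ℕ → ℝ := fun j => ((N : ℝ) - 1 - (j : ℝ)) / (N : ℝ) with ha
  set b : ℕ → ℝ := fun j => (j : ℝ) / (N : ℝ) with hb
  set M : ℕ → Matrix (Fin dy) (Fin dx) ℝ :=
    fun j => psdRpow h1 (a j / 2) * Z * psdRpow h2 (b j / 2) with hM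
  have haj : ∀ j ∈ Finset.range N, 0 ≤ a j := by
    intro j hj
    have : (j:ℝ) + 1 ≤ N := by exact_mod_cast Finset.mem_range.mp hj
    have : (0:ℝ) ≤ (N:ℝ) - 1 - j := by linarith
    exact div_nonneg this hNpos.le
  have hbj : ∀ j : ℕ, 0 ≤ b j := fun j => div_nonneg (Nat.cast_nonneg j) hNpos.le
  have hterm : ∀ j ∈ Finset.range N,
      Matrix.trace (psdRpow h1 (a j) * Z * psdRpow h2 (b j) * Zᵀ)
        = Matrix.trace (M j * (M j)ᵀ) := by
    intro j hj
    have hMT : (M j)ᵀ = psdRpow h2 (b j / 2) * Zᵀ * psdRpow h1 (a j / 2) := by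
      simp [hM, transpose_mul, psdRpow_transpose, Matrix.mul_assoc]
    have key : M j * (M j)ᵀ =
        (psdRpow h1 (a j / 2) * Z * psdRpow h2 (b j / 2) * psdRpow h2 (b j / 2) * Zᵀ)
          * psdRpow h1 (a j / 2) := by
      rw [hMT]
      simp only [hM, Matrix.mul_assoc]
    rw [key, Matrix.trace_mul_comm (psdRpow h1 (a j / 2) * Z * psdRpow h2 (b j / 2) *
        psdRpow h2 (b j / 2) * Zᵀ) (psdRpow h1 (a j / 2)),
      ← psdRpow_half_mul_half h1 hev1 (haj j hj),
      ← psdRpow_half_mul_half h2 hev2 (hbj j)]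
    simp only [Matrix.mul_assoc]
  have hAWtr : Matrix.trace (AW N h1 h2 Z * Zᵀ)
      = ∑ j ∈ Finset.range N, Matrix.trace (M j * (M j)ᵀ) := by
    rw [AW, Matrix.sum_mul, Matrix.trace_sum]
    exact Finset.sum_congr rfl hterm
  have hMzero : ∀ j ∈ Finset.range N, M j = 0 := by
    intro j hj
    apply eq_zero_of_trace_mul_transpose_self
    refine (Finset.sum_eq_zero_iff_of_nonneg ?_).mp (hAWtr ▸ h0) j hj
    exact fun j _ => trace_mul_transpose_self_nonneg (M j)
  -- j = 0 : W Wᵀ Z = 0, hence Wᵀ Z = 0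
  have hb0 : b 0 / 2 = 0 := by simp [hb]
  have hM0 : psdRpow h1 (a 0 / 2) * Z = 0 := by
    have h := hMzero 0 (Finset.mem_range.mpr (by omega))
    simp only [hM] at h
    rwa [hb0, psdRpow_zero, Matrix.mul_one] at h
  have hWWZ : (W * Wᵀ) * Z = 0 := by
    have ha01 : a 0 ≤ 1 := by
      simp only [ha]
      rw [div_le_one hNpos]
      push_cast
      linarith
    have ha00 : 0 ≤ a 0 := haj 0 (Finset.mem_range.mpr (by omega))
    have hcomb : psdRpow h1 (1 - a 0 / 2) * psdRpow h1 (a 0 / 2) = psdRpow h1 1 := by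
      rw [psdRpow_add_of_nonneg h1 hev1 (by linarith) (by linarith)]
      norm_num
    calc (W * Wᵀ) * Z = psdRpow h1 1 * Z := by rw [psdRpow_one]
      _ = psdRpow h1 (1 - a 0 / 2) * (psdRpow h1 (a 0 / 2) * Z) := by
          rw [← Matrix.mul_assoc, hcomb]
      _ = 0 := by rw [hM0, Matrix.mul_zero]
  have hWZ : Wᵀ * Z = 0 := by
    apply Matrix.conjTranspose_mul_self_eq_zero.mp
    rw [conjTranspose_mul, conjTranspose_eq_transpose_of_trivial,
      conjTranspose_eq_transpose_of_trivial, transpose_transpose]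
    calc Zᵀ * W * (Wᵀ * Z) = Zᵀ * ((W * Wᵀ) * Z) := by simp only [Matrix.mul_assoc]
      _ = 0 := by rw [hWWZ, Matrix.mul_zero]
  -- j = N - 1 : Z Wᵀ W = 0, hence Z Wᵀ = 0
  have haN : a (N - 1) / 2 = 0 := by
    have h1N : 1 ≤ N := by omega
    have hc : ((N - 1 : ℕ) : ℝ) = (N : ℝ) - 1 := by
      rw [Nat.cast_sub h1N]; norm_num
    simp only [ha]
    rw [hc]
    ring_nf
  have hMN : Z * psdRpow h2 (b (N - 1) / 2) = 0 := by
    have h := hMzero (N - 1) (Finset.mem_range.mpr (by omega))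
    simp only [hM] at h
    rwa [haN, psdRpow_zero, Matrix.one_mul] at h
  have hZWW : Z * (Wᵀ * W) = 0 := by
    have hbN1 : b (N - 1) ≤ 1 := by
      simp only [hb]
      rw [div_le_one hNpos]
      exact_mod_cast Nat.sub_le N 1
    have hcomb : psdRpow h2 (b (N - 1) / 2) * psdRpow h2 (1 - b (N - 1) / 2) = psdRpow h2 1 := by
      rw [psdRpow_add_of_nonneg h2 hev2 (by linarith [hbj (N-1)]) (by linarith [hbj (N-1)])]
      norm_num
    calc Z * (Wᵀ * W) = Z * psdRpow h2 1 := by rw [psdRpow_one]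
      _ = (Z * psdRpow h2 (b (N - 1) / 2)) * psdRpow h2 (1 - b (N - 1) / 2) := by
          rw [Matrix.mul_assoc, hcomb]
      _ = 0 := by rw [hMN, Matrix.zero_mul]
  have hZW : Z * Wᵀ = 0 := by
    apply Matrix.self_mul_conjTranspose_eq_zero.mp
    rw [conjTranspose_mul, conjTranspose_eq_transpose_of_trivial,
      conjTranspose_eq_transpose_of_trivial, transpose_transpose]
    calc Z * Wᵀ * (W * Zᵀ) = (Z * (Wᵀ * W)) * Zᵀ := by simp only [Matrix.mul_assoc]
      _ = 0 := by rw [hZWW, Matrix.zero_mul]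
  -- conclude
  have hZtW : Zᵀ * W = 0 := by
    have := congrArg Matrix.transpose hWZ
    simpa [transpose_mul] using this
  have hWZt : W * Zᵀ = 0 := by
    have := congrArg Matrix.transpose hZW
    simpa [transpose_mul] using this
  apply eq_zero_of_trace_mul_transpose_self
  calc Matrix.trace (Z * Zᵀ) = Matrix.trace ((W * A + B * W) * Zᵀ) := by rw [← hZ]
    _ = Matrix.trace (W * A * Zᵀ) + Matrix.trace (B * W * Zᵀ) := by
        rw [Matrix.add_mul, Matrix.trace_add]
    _ = Matrix.trace (A * (Zᵀ * W)) + Matrix.trace (B * (W * Zᵀ)) := by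
        rw [Matrix.mul_assoc, Matrix.trace_mul_comm W, Matrix.mul_assoc, Matrix.mul_assoc]
    _ = 0 := by rw [hZtW, hWZt]; simp
end

section
/- Let A ∈ ℝ^{m×m}, B ∈ ℝ^{n×n} be positive definite, Y ∈ ℝ^{m×n} and p ≥ 2 an integer. Then the unique solution X of A^{p-1} X + A^{p-2} X B + ⋯ + X B^{p-1} = Y is given by X = (sin(π/p)/π) ∫_0^∞ (t I_m + A^p)^{-1} Y (t I_n + B^p)^{-1} t^{1/p} dt. -/
/-!
Diagonalize `A = U diag(d) Uᵀ` and `B = V diag(e) Vᵀ` with orthogonal `U`, `V`. In the coordinates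
`Z = Uᵀ X V` both `X ↦ ∑ⱼ A^(p-1-j) X B^j` and `Y ↦ (t + A^p)⁻¹ Y (t + B^p)⁻¹` act entrywise, by
the factors `∑ⱼ dₖ^(p-1-j) eᵣ^j` and `(t + dₖ^p)⁻¹ (t + eᵣ^p)⁻¹`, so the theorem reduces to the
scalar identity `(sin(π/p)/π) ∫₀^∞ t^(1/p) / ((t + x^p)(t + y^p)) dt = (∑ⱼ x^(p-1-j) y^j)⁻¹`.

With `s = 1/p`, partial fractions reduce the case `x ≠ y` to
`∫₀^∞ t^(s-1)/(t+c) dt = π/sin(πs) · c^(s-1)`, and `(y - x)/(y^p - x^p)` is the inverse of the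
geometric sum; the case `x = y` needs `∫₀^∞ t^s/(t+c)² dt = s π/sin(πs) · c^(s-1)`. Both are
instances of the half-line Beta integral
`∫₀^∞ t^(a-1) (t+c)^(-(a+b)) dt = Γ(a)Γ(b)/Γ(a+b) · c^(-b)`, which follows by writing
`(t+c)^(-(a+b))` as a Gamma integral and swapping the integrals (Tonelli); Euler's reflection
formula turns `Γ(s)Γ(1-s)` into `π/sin(πs)`.
-/

open Matrix MeasureTheory Set Real Unitary

lemma lintegral_mul_rpow_mul_exp_neg_mul_Ioi {K a r : ℝ} (hK : 0 ≤ K) (ha : 0 < a) (hr : 0 < r) :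
    ∫⁻ t in Ioi (0 : ℝ), ENNReal.ofReal (K * (t ^ (a - 1) * exp (-(r * t))))
      = ENNReal.ofReal (K * ((1 / r) ^ a * Gamma a)) := by
  have hint : IntegrableOn (fun t : ℝ => t ^ (a - 1) * exp (-(r * t))) (Ioi 0) :=
    .of_integral_ne_zero (by rw [integral_rpow_mul_exp_neg_mul_Ioi ha hr]; positivity)
  rw [← integral_rpow_mul_exp_neg_mul_Ioi ha hr, ← integral_const_mul,
    ofReal_integral_eq_lintegral_ofReal (hint.const_mul K)]
  filter_upwards [ae_restrict_mem measurableSet_Ioi] with t (ht : 0 < t)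
  positivity

lemma lintegral_rpow_mul_add_rpow_neg_Ioi {a b c : ℝ} (ha : 0 < a) (hb : 0 < b) (hc : 0 < c) :
    ∫⁻ t in Ioi (0 : ℝ), ENNReal.ofReal (t ^ (a - 1) * (t + c) ^ (-(a + b)))
      = ENNReal.ofReal (Gamma a * Gamma b / Gamma (a + b) * c ^ (-b)) := by
  have hab : 0 < a + b := by linarith
  set F : ℝ → ℝ → ℝ :=
    fun t x => t ^ (a - 1) / Gamma (a + b) * (x ^ (a + b - 1) * exp (-((t + c) * x)))
  have hF : Measurable (Function.uncurry fun t x => ENNReal.ofReal (F t x)) := by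
    apply Measurable.ennreal_ofReal; fun_prop
  calc ∫⁻ t in Ioi (0 : ℝ), ENNReal.ofReal (t ^ (a - 1) * (t + c) ^ (-(a + b)))
      = ∫⁻ t in Ioi (0 : ℝ), ∫⁻ x in Ioi (0 : ℝ), ENNReal.ofReal (F t x) := by
        refine setLIntegral_congr_fun measurableSet_Ioi fun t (ht : 0 < t) => ?_
        have htc : 0 < t + c := by linarith
        rw [lintegral_mul_rpow_mul_exp_neg_mul_Ioi (by positivity) hab htc, one_div,
          inv_rpow htc.le, ← rpow_neg htc.le]
        field_simp
    _ = ∫⁻ x in Ioi (0 : ℝ), ∫⁻ t in Ioi (0 : ℝ), ENNReal.ofReal (F t x) :=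
        lintegral_lintegral_swap hF.aemeasurable
    _ = ∫⁻ x in Ioi (0 : ℝ), ENNReal.ofReal
          (Gamma a / Gamma (a + b) * (x ^ (b - 1) * exp (-(c * x)))) := by
        refine setLIntegral_congr_fun measurableSet_Ioi fun x (hx : 0 < x) => ?_
        have hK : 0 ≤ x ^ (a + b - 1) * exp (-(c * x)) / Gamma (a + b) := by positivity
        calc ∫⁻ t in Ioi (0 : ℝ), ENNReal.ofReal (F t x)
            = ∫⁻ t in Ioi (0 : ℝ), ENNReal.ofReal
                (x ^ (a + b - 1) * exp (-(c * x)) / Gamma (a + b) *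
                  (t ^ (a - 1) * exp (-(x * t)))) := by
              refine lintegral_congr fun t => ?_
              simp only [F]
              rw [show -((t + c) * x) = -(c * x) + -(x * t) by ring, exp_add]
              ring_nf
          _ = _ := by
              rw [lintegral_mul_rpow_mul_exp_neg_mul_Ioi hK ha hx, one_div, inv_rpow hx.le,
                show x ^ (a + b - 1) = x ^ a * x ^ (b - 1) by rw [← rpow_add hx]; ring_nf]
              congr 1
              field_simp
    _ = _ := by
        rw [lintegral_mul_rpow_mul_exp_neg_mul_Ioi (by positivity) hb hc, one_div,
          inv_rpow hc.le, ← rpow_neg hc.le]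
        congr 1
        ring

lemma integrableOn_rpow_mul_add_rpow_neg_Ioi {a b c : ℝ} (ha : 0 < a) (hb : 0 < b) (hc : 0 < c) :
    IntegrableOn (fun t : ℝ => t ^ (a - 1) * (t + c) ^ (-(a + b))) (Ioi 0) := by
  refine ⟨by fun_prop, ?_⟩
  rw [hasFiniteIntegral_iff_ofReal, lintegral_rpow_mul_add_rpow_neg_Ioi ha hb hc]
  · exact ENNReal.ofReal_lt_top
  filter_upwards [ae_restrict_mem measurableSet_Ioi] with t (ht : 0 < t)
  have : 0 < t + c := by linarith
  positivity

lemma integral_rpow_mul_add_rpow_neg_Ioi {a b c : ℝ} (ha : 0 < a) (hb : 0 < b) (hc : 0 < c) :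
    ∫ t in Ioi (0 : ℝ), t ^ (a - 1) * (t + c) ^ (-(a + b))
      = Gamma a * Gamma b / Gamma (a + b) * c ^ (-b) := by
  rw [integral_eq_lintegral_of_nonneg_ae _ (by fun_prop),
    lintegral_rpow_mul_add_rpow_neg_Ioi ha hb hc, ENNReal.toReal_ofReal]
  · have := Gamma_pos_of_pos ha
    have := Gamma_pos_of_pos hb
    have := Gamma_pos_of_pos (add_pos ha hb)
    positivity
  filter_upwards [ae_restrict_mem measurableSet_Ioi] with t (ht : 0 < t)
  have : 0 < t + c := by linarith
  positivity

section

variable {s : ℝ}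

lemma integrableOn_rpow_sub_one_mul_inv_add (hs0 : 0 < s) (hs1 : s < 1) {c : ℝ} (hc : 0 < c) :
    IntegrableOn (fun t : ℝ => t ^ (s - 1) * (t + c)⁻¹) (Ioi 0) := by
  simpa [rpow_neg_one] using integrableOn_rpow_mul_add_rpow_neg_Ioi hs0 (sub_pos.2 hs1) hc

lemma integral_rpow_sub_one_mul_inv_add (hs0 : 0 < s) (hs1 : s < 1) {c : ℝ} (hc : 0 < c) :
    ∫ t in Ioi (0 : ℝ), t ^ (s - 1) * (t + c)⁻¹ = π / sin (π * s) * c ^ (s - 1) := by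
  simpa [rpow_neg_one, Gamma_mul_Gamma_one_sub] using
    integral_rpow_mul_add_rpow_neg_Ioi hs0 (sub_pos.2 hs1) hc

lemma integrableOn_inv_add_mul_inv_add_mul_rpow (hs0 : 0 < s) (hs1 : s < 1) {α β : ℝ}
    (hα : 0 ≤ α) (hβ : 0 < β) :
    IntegrableOn (fun t : ℝ => (t + α)⁻¹ * (t + β)⁻¹ * t ^ s) (Ioi 0) := by
  refine (integrableOn_rpow_sub_one_mul_inv_add hs0 hs1 hβ).mono' (by fun_prop) ?_
  filter_upwards [ae_restrict_mem measurableSet_Ioi] with t (ht : 0 < t)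
  have hα' : 0 < t + α := by linarith
  have hβ' : 0 < t + β := by linarith
  rw [norm_of_nonneg (by positivity), rpow_sub_one ht.ne']
  calc (t + α)⁻¹ * (t + β)⁻¹ * t ^ s ≤ t⁻¹ * (t + β)⁻¹ * t ^ s := by
        gcongr; linarith
    _ = t ^ s / t * (t + β)⁻¹ := by ring

lemma integral_inv_add_mul_inv_add_mul_rpow (hs0 : 0 < s) (hs1 : s < 1) {α β : ℝ}
    (hα : 0 < α) (hβ : 0 < β) (hαβ : α ≠ β) :
    ∫ t in Ioi (0 : ℝ), (t + α)⁻¹ * (t + β)⁻¹ * t ^ s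
      = π / sin (π * s) * ((β ^ s - α ^ s) / (β - α)) := by
  have : β - α ≠ 0 := sub_ne_zero.2 hαβ.symm
  have hα' := integrableOn_rpow_sub_one_mul_inv_add hs0 hs1 hα
  have hβ' := integrableOn_rpow_sub_one_mul_inv_add hs0 hs1 hβ
  calc ∫ t in Ioi (0 : ℝ), (t + α)⁻¹ * (t + β)⁻¹ * t ^ s
      = ∫ t in Ioi (0 : ℝ), (β - α)⁻¹ *
          (β * (t ^ (s - 1) * (t + β)⁻¹) - α * (t ^ (s - 1) * (t + α)⁻¹)) := by
        refine setIntegral_congr_fun measurableSet_Ioi fun t (ht : 0 < t) => ?_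
        have : t + α ≠ 0 := by linarith
        have : t + β ≠ 0 := by linarith
        rw [rpow_sub_one ht.ne']
        field_simp
        ring
    _ = π / sin (π * s) * ((β ^ s - α ^ s) / (β - α)) := by
        rw [integral_const_mul, integral_sub (hβ'.const_mul β) (hα'.const_mul α),
          integral_const_mul, integral_const_mul, integral_rpow_sub_one_mul_inv_add hs0 hs1 hα,
          integral_rpow_sub_one_mul_inv_add hs0 hs1 hβ, rpow_sub_one hα.ne', rpow_sub_one hβ.ne']
        field_simp

lemma integral_inv_add_mul_inv_add_self_mul_rpow (hs0 : 0 < s) (hs1 : s < 1) {α : ℝ}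
    (hα : 0 < α) :
    ∫ t in Ioi (0 : ℝ), (t + α)⁻¹ * (t + α)⁻¹ * t ^ s = π / sin (π * s) * (s * α ^ (s - 1)) := by
  calc ∫ t in Ioi (0 : ℝ), (t + α)⁻¹ * (t + α)⁻¹ * t ^ s
      = ∫ t in Ioi (0 : ℝ), t ^ (s + 1 - 1) * (t + α) ^ (-(s + 1 + (1 - s))) := by
        refine setIntegral_congr_fun measurableSet_Ioi fun t (ht : 0 < t) => ?_
        have : 0 < t + α := by linarith
        rw [add_sub_cancel_right, show s + 1 + (1 - s) = 2 by ring, rpow_neg this.le,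
          rpow_two, sq, mul_inv]
        ring
    _ = π / sin (π * s) * (s * α ^ (s - 1)) := by
        rw [integral_rpow_mul_add_rpow_neg_Ioi (add_pos hs0 one_pos) (sub_pos.2 hs1) hα,
          show s + 1 + (1 - s) = 2 by ring, Gamma_add_one hs0.ne', Gamma_two, neg_sub,
          ← Gamma_mul_Gamma_one_sub]
        ring

end

lemma one_div_natCast_mem_Ioo {p : ℕ} (hp : 2 ≤ p) : (1 : ℝ) / p ∈ Ioo 0 1 :=
  ⟨by positivity, by rw [div_lt_one (by positivity)]; exact_mod_cast hp⟩

lemma sin_pi_div_div_pi_mul_integral_inv_add_pow_mul_inv_add_pow_mul_rpow {p : ℕ} (hp : 2 ≤ p)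
    {a b : ℝ} (ha : 0 < a) (hb : 0 < b) :
    sin (π / p) / π * ∫ t in Ioi (0 : ℝ), (t + a ^ p)⁻¹ * (t + b ^ p)⁻¹ * t ^ ((1 : ℝ) / p)
      = (∑ j ∈ Finset.range p, a ^ (p - 1 - j) * b ^ j)⁻¹ := by
  obtain ⟨hs0, hs1⟩ := one_div_natCast_mem_Ioo hp
  have hsin : sin (π / p) / π * (π / sin (π * (1 / p))) = 1 := by
    have : 0 < sin (π / p) := sin_pos_of_pos_of_lt_pi (by positivity)
      (div_lt_self pi_pos (by exact_mod_cast hp))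
    rw [mul_one_div]; field_simp
  have hroot : ∀ x : ℝ, 0 < x → (x ^ p) ^ ((1 : ℝ) / p) = x := fun x hx => by
    rw [one_div, pow_rpow_inv_natCast hx.le (by omega)]
  rcases eq_or_ne a b with rfl | hab
  · rw [integral_inv_add_mul_inv_add_self_mul_rpow hs0 hs1 (by positivity), ← mul_assoc, hsin,
      one_mul, rpow_sub_one (by positivity), hroot a ha]
    have hsum : ∑ j ∈ Finset.range p, a ^ (p - 1 - j) * a ^ j = p * a ^ (p - 1) := by
      rw [Finset.sum_congr rfl fun j hj => by rw [← pow_add, Nat.sub_add_cancel (by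
        simp at hj; omega)], Finset.sum_const, Finset.card_range, nsmul_eq_mul]
    rw [hsum, show p = p - 1 + 1 by omega, pow_succ]
    push_cast [show 1 ≤ p by omega]
    field_simp
  · have hne : a ^ p ≠ b ^ p := fun h => hab ((pow_left_inj₀ ha.le hb.le (by omega)).1 h)
    rw [integral_inv_add_mul_inv_add_mul_rpow hs0 hs1 (by positivity) (by positivity) hne,
      ← mul_assoc, hsin, one_mul, hroot a ha, hroot b hb, ← geom_sum₂_mul]
    simp_rw [div_mul_cancel_right₀ (sub_ne_zero.2 hab.symm), mul_comm (b ^ _)]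

namespace Matrix

variable {m n R : Type*} [Fintype m] [DecidableEq m] [Fintype n] [DecidableEq n]

lemma PosDef.exists_eq_conjStarAlgAut_diagonal {A : Matrix m m ℝ} (hA : A.PosDef) :
    ∃ (U : unitaryGroup m ℝ) (d : m → ℝ), (∀ k, 0 < d k) ∧
      A = conjStarAlgAut ℝ _ U (diagonal d) :=
  ⟨_, _, hA.eigenvalues_pos, by simpa using hA.1.spectral_theorem⟩

lemma exists_eq_unitary_mul_mul_star [CommRing R] [StarRing R] (U : unitaryGroup m R)
    (V : unitaryGroup n R) (X : Matrix m n R) :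
    ∃ Z : Matrix m n R, X = (U : Matrix m m R) * Z * star (V : Matrix n n R) := by
  refine ⟨star (U : Matrix m m R) * X * (V : Matrix n n R), ?_⟩
  simp only [← Matrix.mul_assoc, mul_star_self_of_mem U.2, Matrix.one_mul]
  simp only [Matrix.mul_assoc, mul_star_self_of_mem V.2, Matrix.mul_one]

lemma inv_conjStarAlgAut [CommRing R] [StarRing R] (U : unitaryGroup m R) (M : Matrix m m R) :
    (conjStarAlgAut R _ U M)⁻¹ = conjStarAlgAut R _ U M⁻¹ := by
  rw [conjStarAlgAut_apply, conjStarAlgAut_apply, mul_inv_rev, mul_inv_rev,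
    inv_eq_left_inv (mul_star_self_of_mem U.2), inv_eq_left_inv (star_mul_self_of_mem U.2),
    mul_assoc]

lemma inv_smul_one_add_conjStarAlgAut_diagonal [Field R] [StarRing R] (U : unitaryGroup m R)
    {t : R} {d : m → R} (h : ∀ k, t + d k ≠ 0) :
    (t • 1 + conjStarAlgAut R _ U (diagonal d))⁻¹
      = conjStarAlgAut R _ U (diagonal fun k => (t + d k)⁻¹) := by
  rw [← map_one (conjStarAlgAut R _ U), ← map_smul, ← map_add, inv_conjStarAlgAut,
    smul_one_eq_diagonal, diagonal_add]
  congr 1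
  refine inv_eq_left_inv ?_
  rw [diagonal_mul_diagonal, ← diagonal_one]
  exact congrArg diagonal (funext fun k => inv_mul_cancel₀ (h k))

lemma conjStarAlgAut_diagonal_mul_mul_conjStarAlgAut_diagonal [CommRing R] [StarRing R]
    (U : unitaryGroup m R) (V : unitaryGroup n R) (d : m → R) (e : n → R) (W : Matrix m n R) :
    conjStarAlgAut R _ U (diagonal d) * ((U : Matrix m m R) * W * star (V : Matrix n n R)) *
        conjStarAlgAut R _ V (diagonal e)
      = (U : Matrix m m R) * of (fun k r => d k * W k r * e r) * star (V : Matrix n n R) := by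
  simp only [conjStarAlgAut_apply, Matrix.mul_assoc]
  rw [← Matrix.mul_assoc (star (U : Matrix m m R)), star_mul_self_of_mem U.2, Matrix.one_mul,
    ← Matrix.mul_assoc (star (V : Matrix n n R)), star_mul_self_of_mem V.2, Matrix.one_mul,
    ← Matrix.mul_assoc W, ← Matrix.mul_assoc (diagonal d)]
  congr 2
  ext k r
  simp [diagonal_mul, mul_diagonal, mul_assoc]

lemma sum_pow_mul_mul_pow_conjStarAlgAut_diagonal [CommRing R] [StarRing R] (p : ℕ)
    (U : unitaryGroup m R) (V : unitaryGroup n R) (d : m → R) (e : n → R) (Z : Matrix m n R) :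
    ∑ j ∈ Finset.range p, conjStarAlgAut R _ U (diagonal d) ^ (p - 1 - j) *
        ((U : Matrix m m R) * Z * star (V : Matrix n n R)) * conjStarAlgAut R _ V (diagonal e) ^ j
      = (U : Matrix m m R) * of (fun k r => (∑ j ∈ Finset.range p, d k ^ (p - 1 - j) * e r ^ j) *
          Z k r) * star (V : Matrix n n R) := by
  simp_rw [← map_pow, diagonal_pow, conjStarAlgAut_diagonal_mul_mul_conjStarAlgAut_diagonal,
    ← Matrix.sum_mul, ← Matrix.mul_sum]
  congr 2
  ext k r
  simp only [Matrix.sum_apply, of_apply, Finset.sum_mul, Pi.pow_apply]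
  exact Finset.sum_congr rfl fun j _ => by ring

lemma inv_smul_one_add_mul_mul_inv_smul_one_add [Field R] [StarRing R]
    (U : unitaryGroup m R) (V : unitaryGroup n R) {t : R} {d : m → R} {e : n → R}
    (hd : ∀ k, t + d k ≠ 0) (he : ∀ r, t + e r ≠ 0) (W : Matrix m n R) :
    (t • 1 + conjStarAlgAut R _ U (diagonal d))⁻¹ *
        ((U : Matrix m m R) * W * star (V : Matrix n n R)) *
        (t • 1 + conjStarAlgAut R _ V (diagonal e))⁻¹
      = (U : Matrix m m R) * of (fun k r => (t + d k)⁻¹ * W k r * (t + e r)⁻¹) *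
          star (V : Matrix n n R) := by
  rw [inv_smul_one_add_conjStarAlgAut_diagonal U hd, inv_smul_one_add_conjStarAlgAut_diagonal V he,
    conjStarAlgAut_diagonal_mul_mul_conjStarAlgAut_diagonal]

lemma integral_mul_of_mul_apply {m n α ι κ : Type*} [Fintype ι] [Fintype κ] [MeasurableSpace α]
    {μ : Measure α} (P : Matrix m ι ℝ) (Q : Matrix κ n ℝ) (f : ι → κ → α → ℝ)
    (hf : ∀ k r, Integrable (f k r) μ) (i : m) (l : n) :
    ∫ x, (P * of (fun k r => f k r x) * Q) i l ∂μ
      = (P * of (fun k r => ∫ x, f k r x ∂μ) * Q) i l := by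
  simp only [mul_apply, of_apply]
  rw [integral_finsetSum _ fun r _ => by fun_prop]
  refine Finset.sum_congr rfl fun r _ => ?_
  rw [integral_mul_const, integral_finsetSum _ fun k _ => by fun_prop]
  congr 1
  exact Finset.sum_congr rfl fun k _ => integral_const_mul _ _

lemma integral_inv_smul_one_add_mul_mul_inv_smul_one_add_apply_mul_rpow {s : ℝ} (hs0 : 0 < s)
    (hs1 : s < 1) (U : unitaryGroup m ℝ) (V : unitaryGroup n ℝ) {d : m → ℝ} {e : n → ℝ}
    (hd : ∀ k, 0 < d k) (he : ∀ r, 0 < e r) (W : Matrix m n ℝ) (i : m) (l : n) :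
    ∫ t in Ioi (0 : ℝ), ((t • 1 + conjStarAlgAut ℝ _ U (diagonal d))⁻¹ *
        ((U : Matrix m m ℝ) * W * star (V : Matrix n n ℝ)) *
        (t • 1 + conjStarAlgAut ℝ _ V (diagonal e))⁻¹) i l * t ^ s
      = ((U : Matrix m m ℝ) *
          of (fun k r => (∫ t in Ioi (0 : ℝ), (t + d k)⁻¹ * (t + e r)⁻¹ * t ^ s) * W k r) *
          star (V : Matrix n n ℝ)) i l := by
  simp_rw [← integral_mul_const]
  rw [← integral_mul_of_mul_apply _ _ (fun k r t => (t + d k)⁻¹ * (t + e r)⁻¹ * t ^ s * W k r)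
    fun k r => (integrableOn_inv_add_mul_inv_add_mul_rpow hs0 hs1 (hd k).le (he r)).mul_const _]
  refine setIntegral_congr_fun measurableSet_Ioi fun t (ht : 0 < t) => ?_
  rw [inv_smul_one_add_mul_mul_inv_smul_one_add U V (fun k => by linarith [hd k])
    (fun r => by linarith [he r])]
  simp only [mul_apply, of_apply, Finset.sum_mul]
  exact Finset.sum_congr rfl fun r _ => Finset.sum_congr rfl fun k _ => by ring

end Matrix

/-- For positive definite A, B and p ≥ 2, the solution X of
A^{p-1} X + A^{p-2} X B + ⋯ + X B^{p-1} = Y is given (entrywise) by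
X = (sin(π/p)/π) ∫_0^∞ (t I + A^p)⁻¹ Y (t I + B^p)⁻¹ t^{1/p} dt. -/
theorem stmt11 {m n : ℕ} (p : ℕ) (hp : 2 ≤ p)
    (A : Matrix (Fin m) (Fin m) ℝ) (B : Matrix (Fin n) (Fin n) ℝ)
    (hA : A.PosDef) (hB : B.PosDef) (Y : Matrix (Fin m) (Fin n) ℝ)
    (X : Matrix (Fin m) (Fin n) ℝ)
    (hX : ∑ j ∈ Finset.range p, A ^ (p - 1 - j) * X * B ^ j = Y) :
    ∀ (i : Fin m) (l : Fin n),
      X i l = Real.sin (Real.pi / p) / Real.pi *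
        ∫ t in Set.Ioi (0 : ℝ),
          (((t • (1 : Matrix (Fin m) (Fin m) ℝ) + A ^ p)⁻¹ * Y *
              (t • (1 : Matrix (Fin n) (Fin n) ℝ) + B ^ p)⁻¹) i l) * t ^ ((1 : ℝ) / p) := by
  intro i l
  obtain ⟨U, d, hd, rfl⟩ := hA.exists_eq_conjStarAlgAut_diagonal
  obtain ⟨V, e, he, rfl⟩ := hB.exists_eq_conjStarAlgAut_diagonal
  obtain ⟨Z, rfl⟩ := exists_eq_unitary_mul_mul_star U V X
  rw [sum_pow_mul_mul_pow_conjStarAlgAut_diagonal] at hX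
  subst hX
  obtain ⟨hs0, hs1⟩ := one_div_natCast_mem_Ioo hp
  simp_rw [← map_pow, diagonal_pow]
  rw [integral_inv_smul_one_add_mul_mul_inv_smul_one_add_apply_mul_rpow hs0 hs1 U V
    (d := d ^ p) (e := e ^ p) (fun k => pow_pos (hd k) p) (fun r => pow_pos (he r) p)]
  rw [← smul_eq_mul, ← Matrix.smul_apply, ← Matrix.smul_mul, ← Matrix.mul_smul]
  congr! 3
  ext k r
  have hS : ∑ j ∈ Finset.range p, d k ^ (p - 1 - j) * e r ^ j ≠ 0 :=
    (Finset.sum_pos (fun j _ => mul_pos (pow_pos (hd k) _) (pow_pos (he r) _))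
      ⟨0, Finset.mem_range.2 (by omega)⟩).ne'
  simp only [Matrix.smul_apply, of_apply, Pi.pow_apply, smul_eq_mul]
  rw [← mul_assoc, sin_pi_div_div_pi_mul_integral_inv_add_pow_mul_inv_add_pow_mul_rpow hp (hd k)
    (he r), inv_mul_cancel_left₀ hS]
end

section
/- Let (W_1,...,W_N) be a critical point of L^N (i.e. all partial gradients ∇_{W_j} L^N vanish), let W = W_N⋯W_1 and k = rank(W). Then for every Z in the tangent space T_W M_k = {W A + B W}, the directional derivative of L^1 at W in direction Z is zero; i.e. W is a critical point of L^1 restricted to M_k. -/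
open Matrix

/-- The loss L¹(W) = (1/2)‖Y - W X‖_F². -/
noncomputable def L1 {dx dy m : ℕ} (X : Matrix (Fin dx) (Fin m) ℝ)
    (Y : Matrix (Fin dy) (Fin m) ℝ) (W : Matrix (Fin dy) (Fin dx) ℝ) : ℝ :=
  (1 / 2) * Matrix.trace ((Y - W * X) * (Y - W * X)ᵀ)

/-!
At a critical point, varying only the top layer (W = W_N Q) gives ∇L¹(W) Qᵀ = 0, and varying
only the bottom layer (W = R W_1) gives Rᵀ ∇L¹(W) = 0; hence ∇L¹(W) Wᵀ = 0 and Wᵀ ∇L¹(W) = 0.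
The derivative of L¹ at W in the direction W A + B W is
tr(∇L¹(W) (W A + B W)ᵀ) = tr(Wᵀ ∇L¹(W) Aᵀ) + tr(∇L¹(W) Wᵀ Bᵀ) = 0.
-/

lemma mcast_mul_left {a b c e : ℕ} (h : a = b) (M : Matrix (Fin a) (Fin c) ℝ)
    (P : Matrix (Fin c) (Fin e) ℝ) :
    mcast h rfl (M * P) = mcast h rfl M * P := by
  ext i j
  simp [mcast, Matrix.mul_apply]

section Layers

variable {d : ℕ → ℕ} (W : ∀ i : ℕ, Matrix (Fin (d (i + 1))) (Fin (d i)) ℝ)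

lemma mcast_layer_mul {p q c : ℕ} (e : p = q) (S : Matrix (Fin (d p)) (Fin c) ℝ) :
    mcast (congrArg (fun i => d (i + 1)) e) rfl (W p * S) = W q * mcast (congrArg d e) rfl S := by
  subst e
  rfl

-- No cast is needed: `a + (k + 1)` and `a + k + 1` agree definitionally.
lemma segProd_succ_eq_shift_mul (a k : ℕ) :
    segProd d W a (k + 1) = segProd (fun i => d (i + 1)) (fun i => W (i + 1)) a k * W a := by
  induction k with
  | zero => exact (Matrix.mul_one _).trans (Matrix.one_mul _).symm
  | succ k ih =>
    change W (a + (k + 1)) * segProd d W a (k + 1) = _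
    rw [ih, ← Matrix.mul_assoc]
    rfl

lemma segProd_update_of_add_le {j : ℕ} (v : Matrix (Fin (d (j + 1))) (Fin (d j)) ℝ)
    {a k : ℕ} (h : a + k ≤ j) :
    segProd d (Function.update W j v) a k = segProd d W a k := by
  induction k with
  | zero => rfl
  | succ k ih =>
    change Function.update W j v (a + k) * _ = W (a + k) * _
    rw [Function.update_of_ne (by omega), ih (by omega)]

lemma netProd_succ (n : ℕ) : netProd (n + 1) d W = W n * netProd n d W :=
  mcast_layer_mul W (Nat.zero_add n) (segProd d W 0 n)

lemma netProd_succ_eq_shift_mul (n : ℕ) :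
    netProd (n + 1) d W = netProd n (fun i => d (i + 1)) (fun i => W (i + 1)) * W 0 := by
  rw [netProd, segProd_succ_eq_shift_mul, mcast_mul_left]
  rfl

lemma netProd_update_of_le {N j : ℕ} (h : N ≤ j) (v : Matrix (Fin (d (j + 1))) (Fin (d j)) ℝ) :
    netProd N d (Function.update W j v) = netProd N d W := by
  rw [netProd, segProd_update_of_add_le W v (by omega), netProd]

lemma netProd_update_last (n : ℕ) (v : Matrix (Fin (d (n + 1))) (Fin (d n)) ℝ) :
    netProd (n + 1) d (Function.update W n v) = v * netProd n d W := by
  rw [netProd_succ, Function.update_self, netProd_update_of_le W le_rfl]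

lemma netProd_update_zero (n : ℕ) (v : Matrix (Fin (d 1)) (Fin (d 0)) ℝ) :
    netProd (n + 1) d (Function.update W 0 v)
      = netProd n (fun i => d (i + 1)) (fun i => W (i + 1)) * v := by
  rw [netProd_succ_eq_shift_mul, Function.update_self]
  congr 2

lemma LN_eq_L1_netProd (N m : ℕ) (X : Matrix (Fin (d 0)) (Fin m) ℝ)
    (Y : Matrix (Fin (d N)) (Fin m) ℝ) : LN N d m X Y W = L1 X Y (netProd N d W) := rfl

end Layers

lemma eq_zero_of_forall_trace_mul_transpose_eq_zero {m n : Type*} [Fintype m] [Fintype n]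
    {M : Matrix m n ℝ} (h : ∀ V : Matrix m n ℝ, trace (M * Vᵀ) = 0) : M = 0 :=
  trace_mul_conjTranspose_self_eq_zero_iff.mp (h M)

section L1

variable {dx dy m : ℕ} (X : Matrix (Fin dx) (Fin m) ℝ) (Y : Matrix (Fin dy) (Fin m) ℝ)

def gradL1 (P : Matrix (Fin dy) (Fin dx) ℝ) : Matrix (Fin dy) (Fin dx) ℝ := (P * X - Y) * Xᵀ

lemma L1_add_smul (P Z : Matrix (Fin dy) (Fin dx) ℝ) (t : ℝ) :
    L1 X Y (P + t • Z)
      = L1 X Y P + t * trace (gradL1 X Y P * Zᵀ) + t ^ 2 * ((1 / 2) * trace (Z * X * (Z * X)ᵀ)) := by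
  have hres : Y - (P + t • Z) * X = (Y - P * X) - t • (Z * X) := by
    rw [Matrix.add_mul, Matrix.smul_mul]; abel
  have hgrad : trace (gradL1 X Y P * Zᵀ) = - trace ((Y - P * X) * (Z * X)ᵀ) := by
    rw [gradL1, transpose_mul, ← trace_neg, ← Matrix.neg_mul, neg_sub, Matrix.mul_assoc]
  rw [L1, L1, hres, hgrad]
  generalize Y - P * X = E
  have hsymm : trace (Z * X * Eᵀ) = trace (E * (Z * X)ᵀ) := by
    rw [← trace_transpose, transpose_mul, transpose_transpose]
  simp only [transpose_sub, transpose_smul, Matrix.sub_mul, Matrix.mul_sub, Matrix.smul_mul,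
    Matrix.mul_smul, trace_sub, trace_smul, smul_eq_mul, hsymm]
  ring

lemma hasDerivAt_L1_add_smul (P Z : Matrix (Fin dy) (Fin dx) ℝ) :
    HasDerivAt (fun t : ℝ => L1 X Y (P + t • Z)) (trace (gradL1 X Y P * Zᵀ)) 0 := by
  have hquad (c₀ c₁ c₂ : ℝ) : HasDerivAt (fun t : ℝ => c₀ + t * c₁ + t ^ 2 * c₂) c₁ 0 :=
    ((((hasDerivAt_id (0 : ℝ)).mul_const c₁).const_add c₀).add
      ((hasDerivAt_pow 2 (0 : ℝ)).mul_const c₂)).congr_deriv (by simp)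
  simpa only [L1_add_smul] using hquad _ _ _

lemma trace_gradL1_mul_transpose_eq_zero_of_hasDerivAt {P Z : Matrix (Fin dy) (Fin dx) ℝ}
    (h : HasDerivAt (fun t : ℝ => L1 X Y (P + t • Z)) 0 0) : trace (gradL1 X Y P * Zᵀ) = 0 :=
  (hasDerivAt_L1_add_smul X Y P Z).unique h

lemma gradL1_mul_transpose_eq_zero_of_critical_left {k : ℕ} (U : Matrix (Fin dy) (Fin k) ℝ)
    (Q : Matrix (Fin k) (Fin dx) ℝ)
    (h : ∀ V, HasDerivAt (fun t : ℝ => L1 X Y ((U + t • V) * Q)) 0 0) :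
    gradL1 X Y (U * Q) * Qᵀ = 0 := by
  refine eq_zero_of_forall_trace_mul_transpose_eq_zero fun V => ?_
  have hV := trace_gradL1_mul_transpose_eq_zero_of_hasDerivAt X Y (Z := V * Q)
    (by simpa only [Matrix.add_mul, Matrix.smul_mul] using h V)
  rwa [transpose_mul, ← Matrix.mul_assoc] at hV

lemma transpose_mul_gradL1_eq_zero_of_critical_right {k : ℕ} (R : Matrix (Fin dy) (Fin k) ℝ)
    (U : Matrix (Fin k) (Fin dx) ℝ)
    (h : ∀ V, HasDerivAt (fun t : ℝ => L1 X Y (R * (U + t • V))) 0 0) :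
    Rᵀ * gradL1 X Y (R * U) = 0 := by
  refine eq_zero_of_forall_trace_mul_transpose_eq_zero fun V => ?_
  have hV := trace_gradL1_mul_transpose_eq_zero_of_hasDerivAt X Y (Z := R * V)
    (by simpa only [Matrix.mul_add, Matrix.mul_smul] using h V)
  rwa [transpose_mul, trace_mul_cycle', ← Matrix.mul_assoc] at hV

lemma hasDerivAt_L1_tangent {P : Matrix (Fin dy) (Fin dx) ℝ}
    (hleft : gradL1 X Y P * Pᵀ = 0) (hright : Pᵀ * gradL1 X Y P = 0)
    (A : Matrix (Fin dx) (Fin dx) ℝ) (B : Matrix (Fin dy) (Fin dy) ℝ) :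
    HasDerivAt (fun t : ℝ => L1 X Y (P + t • (P * A + B * P))) 0 0 := by
  convert hasDerivAt_L1_add_smul X Y P (P * A + B * P) using 1
  rw [transpose_add, transpose_mul, transpose_mul, Matrix.mul_add, trace_add, trace_mul_cycle',
    ← Matrix.mul_assoc, hright, ← Matrix.mul_assoc, hleft]
  simp

end L1

theorem stmt15_general (N : ℕ) (hN : 2 ≤ N) (d : ℕ → ℕ) (m : ℕ)
    (X : Matrix (Fin (d 0)) (Fin m) ℝ) (Y : Matrix (Fin (d N)) (Fin m) ℝ)
    (W : ∀ i : ℕ, Matrix (Fin (d (i + 1))) (Fin (d i)) ℝ)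
    (hcrit : ∀ (j : ℕ), j < N → ∀ V : Matrix (Fin (d (j + 1))) (Fin (d j)) ℝ,
      HasDerivAt (fun t : ℝ => LN N d m X Y (Function.update W j (W j + t • V))) 0 0) :
    ∀ (A : Matrix (Fin (d 0)) (Fin (d 0)) ℝ) (B : Matrix (Fin (d N)) (Fin (d N)) ℝ),
      HasDerivAt
        (fun t : ℝ =>
          L1 X Y (netProd N d W + t • (netProd N d W * A + B * netProd N d W))) 0 0 := by
  obtain ⟨n, rfl⟩ : ∃ n, N = n + 1 := ⟨N - 1, by omega⟩
  have hleft : gradL1 X Y (netProd (n + 1) d W) * (netProd (n + 1) d W)ᵀ = 0 := by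
    have h := gradL1_mul_transpose_eq_zero_of_critical_left X Y (W n) (netProd n d W) fun V => by
      simpa only [LN_eq_L1_netProd, netProd_update_last] using hcrit n (by omega) V
    rw [netProd_succ, transpose_mul, ← Matrix.mul_assoc, h, Matrix.zero_mul]
  have hright : (netProd (n + 1) d W)ᵀ * gradL1 X Y (netProd (n + 1) d W) = 0 := by
    have h := transpose_mul_gradL1_eq_zero_of_critical_right X Y
      (netProd n (fun i => d (i + 1)) (fun i => W (i + 1))) (W 0) fun V => by
        simpa only [LN_eq_L1_netProd, netProd_update_zero] using hcrit 0 (by omega) V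
    rw [netProd_succ_eq_shift_mul, transpose_mul, Matrix.mul_assoc, h, Matrix.mul_zero]
  exact hasDerivAt_L1_tangent X Y hleft hright

/-- If (W_1,…,W_N) is a critical point of L^N (all partial directional derivatives vanish),
then W = W_N⋯W_1 is a critical point of L¹ restricted to the manifold of rank-k matrices,
k = rank W: the directional derivative of L¹ at W vanishes in every tangent direction
Z = W A + B W. -/
theorem stmt15 (N : ℕ) (hN : 2 ≤ N) (d : ℕ → ℕ) (m : ℕ)
    (X : Matrix (Fin (d 0)) (Fin m) ℝ) (Y : Matrix (Fin (d N)) (Fin m) ℝ)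
    (W : ∀ i : ℕ, Matrix (Fin (d (i + 1))) (Fin (d i)) ℝ)
    (hcrit : ∀ (j : ℕ), j < N → ∀ V : Matrix (Fin (d (j + 1))) (Fin (d j)) ℝ,
      HasDerivAt (fun t : ℝ => LN N d m X Y (Function.update W j (W j + t • V))) 0 0)
    (k : ℕ) (hk : (netProd N d W).rank = k) :
    ∀ (A : Matrix (Fin (d 0)) (Fin (d 0)) ℝ) (B : Matrix (Fin (d N)) (Fin (d N)) ℝ),
      HasDerivAt
        (fun t : ℝ =>
          L1 X Y (netProd N d W + t • (netProd N d W * A + B * netProd N d W))) 0 0 :=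
  stmt15_general N hN d m X Y W hcrit
end

section
/- Assume X X^T ∈ ℝ^{d×d} has full rank and suppose W_1 ∈ ℝ^{r×d}, W_2 ∈ ℝ^{d×r} are balanced (W_2^T W_2 = W_1 W_1^T), W_2 ≠ 0, and satisfy the equilibrium equations W_2^T W_2 W_1 X X^T = W_2^T X X^T and W_2 W_1 X X^T W_1^T = X X^T W_1^T. Then W_1 = W_2^T, all nonzero singular values of W_2 equal 1, and there exist k ∈ {1,...,r}, a matrix U ∈ ℝ^{d×k} whose columns are orthonormal eigenvectors of X X^T, and V ∈ ℝ^{r×k} with orthonormal columns, such that W_2 = U V^T; consequently W_2 W_1 = U U^T. -/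
/-!
Cancelling the invertible `X Xᵀ` in the first equilibrium equation gives `W₂ᵀ W₂ W₁ = W₂ᵀ`.
With balancedness, `G = W₁ W₁ᵀ = W₂ᵀ W₂` satisfies `G W₁ = W₂ᵀ`, hence `G³ = G`; being positive
semidefinite, `G` is then idempotent, and expanding `(W₂ᵀ - W₁)(W₂ᵀ - W₁)ᵀ` gives `2G - 2G² = 0`,
so `W₁ = W₂ᵀ`. Now `Q = W₂ W₂ᵀ` is an orthogonal projection and the second equation reads
`Q S Q = S Q` for `S = X Xᵀ`; transposing, `Q` commutes with `S`. The eigenvectors of the symmetric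
matrix `S Q` with nonzero eigenvalue are then an orthonormal basis of the range of `Q` made of
eigenvectors of `S`: they form `U`, and `V = W₂ᵀ U`.
-/

open Matrix

open scoped ComplexOrder

namespace Matrix

lemma mul_transpose_eq_submatrix_mul_transpose_submatrix {R : Type*} [NonUnitalNonAssocSemiring R]
    {m n ι : Type*} [Fintype n] [Fintype ι] {A B : Matrix m n R} {p : n → Prop} [DecidablePred p]
    (e : ι ≃ {c // p c}) (hA : ∀ i c, ¬ p c → A i c = 0) :
    A * Bᵀ = A.submatrix id (Subtype.val ∘ e) * (B.submatrix id (Subtype.val ∘ e))ᵀ := by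
  ext i j
  simp only [mul_apply, transpose_apply, submatrix_apply, id, Function.comp_apply]
  rw [← Fintype.sum_subtype_add_sum_subtype p,
    Fintype.sum_eq_zero (fun c : {c // ¬ p c} => A i c * B j c)
      (fun c => by rw [hA i c c.2, zero_mul]), add_zero]
  exact (e.sum_comp (fun c => A i c * B j c)).symm

lemma transpose_submatrix_mul_submatrix_eq_one {R : Type*} [NonAssocSemiring R]
    {n ι : Type*} [Fintype n] [DecidableEq n] [DecidableEq ι] {E : Matrix n n R} (hE : Eᵀ * E = 1)
    {f : ι → n} (hf : Function.Injective f) :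
    (E.submatrix id f)ᵀ * E.submatrix id f = 1 := by
  rw [transpose_submatrix, ← submatrix_mul _ _ _ _ _ Function.bijective_id, hE, submatrix_one f hf]

lemma card_le_card_of_mul_eq_one {R : Type*} [CommRing R] [StrongRankCondition R]
    {m n : Type*} [Fintype m] [Fintype n] [DecidableEq m] {A : Matrix m n R} {B : Matrix n m R}
    (h : A * B = 1) : Fintype.card m ≤ Fintype.card n :=
  calc Fintype.card m = (A * B).rank := by rw [h, rank_one]
    _ ≤ A.rank := rank_mul_le_left A B
    _ ≤ Fintype.card n := rank_le_card_width A

section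

variable {n : Type*} [Fintype n]

lemma commute_of_mul_mul_eq_mul {R : Type*} [CommSemiring R] {Q S : Matrix n n R}
    (hQ : Q.IsSymm) (hS : S.IsSymm) (h : Q * S * Q = S * Q) : Commute Q S := by
  have ht := congrArg transpose h
  rw [transpose_mul, transpose_mul, transpose_mul, hQ.eq, hS.eq, ← mul_assoc] at ht
  exact ht.symm.trans h

variable [DecidableEq n]

lemma PosSemidef.mul_self_eq_self_of_mul_self_mul_self_eq {𝕜 : Type*} [RCLike 𝕜]
    {G : Matrix n n 𝕜} (hG : G.PosSemidef) (h : G * G * G = G) : G * G = G := by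
  have hunit : IsUnit (G + 1) := (PosDef.posSemidef_add hG PosDef.one).isUnit
  refine sub_eq_zero.mp (hunit.mul_right_cancel ?_)
  rw [zero_mul, sub_mul, mul_add, mul_add, mul_one, mul_one, h]
  abel

lemma IsHermitian.mul_eigenvectorUnitary {𝕜 : Type*} [RCLike 𝕜] {A : Matrix n n 𝕜}
    (hA : A.IsHermitian) :
    A * (hA.eigenvectorUnitary : Matrix n n 𝕜) =
      (hA.eigenvectorUnitary : Matrix n n 𝕜) * diagonal (RCLike.ofReal ∘ hA.eigenvalues) := by
  have h := congrArg (· * (hA.eigenvectorUnitary : Matrix n n 𝕜)) hA.spectral_theorem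
  simpa only [Unitary.conjStarAlgAut_apply, mul_assoc, Unitary.coe_star_mul_self, mul_one] using h

lemma exists_orthonormal_eigenvectors_of_commute_projection {S Q : Matrix n n ℝ}
    (hS : IsUnit S) (hSsymm : S.IsSymm) (hQsymm : Q.IsSymm) (hQ : Q * Q = Q)
    (hcomm : Commute Q S) :
    ∃ (k : ℕ) (U : Matrix n (Fin k) ℝ) (lam : Fin k → ℝ),
      Uᵀ * U = 1 ∧ S * U = U * diagonal lam ∧ Q = U * Uᵀ := by
  have hM : (S * Q).IsHermitian := by
    rw [isHermitian_iff_isSymm, IsSymm, transpose_mul, hSsymm.eq, hQsymm.eq, hcomm.eq]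
  set E : Matrix n n ℝ := (hM.eigenvectorUnitary : Matrix n n ℝ)
  set μ := hM.eigenvalues
  have hE : Eᵀ * E = 1 := by
    simpa only [star_eq_conjTranspose, conjTranspose_eq_transpose_of_trivial] using
      Unitary.coe_star_mul_self hM.eigenvectorUnitary
  have hE' : E * Eᵀ = 1 := by
    simpa only [Unitary.coe_star, star_eq_conjTranspose, conjTranspose_eq_transpose_of_trivial]
      using Unitary.coe_mul_star_self hM.eigenvectorUnitary
  have hME : S * Q * E = E * diagonal μ := by
    simpa only [RCLike.ofReal_real_eq_id, Function.id_comp] using hM.mul_eigenvectorUnitary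
  -- On an eigenvector with `μ c ≠ 0`, `Q` acts as the identity since `Q * (S * Q) = S * Q`;
  -- with `μ c = 0`, invertibility of `S` forces `Q` to kill it.
  have hQE : ∀ i c, (Q * E) i c = if μ c = 0 then 0 else E i c := by
    have hfix : Q * E * diagonal μ = E * diagonal μ := by
      rw [mul_assoc, ← hME, ← mul_assoc, ← mul_assoc, hcomm.eq, mul_assoc S, hQ]
    have hker : Q * E = (((hS.unit⁻¹ : (Matrix n n ℝ)ˣ) : Matrix n n ℝ) * E) * diagonal μ := by
      rw [mul_assoc, ← hME, ← mul_assoc, ← mul_assoc, hS.val_inv_mul, one_mul]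
    intro i c
    split_ifs with hc
    · rw [hker, mul_diagonal, hc, mul_zero]
    · have := congrFun (congrFun hfix i) c
      rw [mul_diagonal, mul_diagonal] at this
      exact mul_right_cancel₀ hc this
  set e := (Fintype.equivFin {c // μ c ≠ 0}).symm
  set U := E.submatrix id (Subtype.val ∘ e)
  have hQEU : (Q * E).submatrix id (Subtype.val ∘ e) = U := by
    ext i j
    simp [hQE, (e j).2, U]
  refine ⟨_, U, μ ∘ Subtype.val ∘ e, ?_, ?_, ?_⟩
  · exact transpose_submatrix_mul_submatrix_eq_one hE (Subtype.val_injective.comp e.injective)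
  · rw [← hQEU, ← submatrix_id_id S, ← submatrix_mul _ _ _ _ _ Function.bijective_id,
      ← mul_assoc, hME]
    ext i j
    simp [mul_diagonal, hQE, (e j).2]
  · calc Q = Q * E * Eᵀ := by rw [mul_assoc, hE', mul_one]
      _ = U * Uᵀ := by
        rw [mul_transpose_eq_submatrix_mul_transpose_submatrix e
          (fun i c hc => by rw [hQE, if_pos (not_not.mp hc)]), hQEU]

end

end Matrix

lemma eq_transpose_of_balanced {r d : Type*} [Fintype r] [Fintype d] [DecidableEq r]
    {W1 : Matrix r d ℝ} {W2 : Matrix d r ℝ} (hbal : W2ᵀ * W2 = W1 * W1ᵀ)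
    (hfix : W2ᵀ * W2 * W1 = W2ᵀ) : W1 = W2ᵀ := by
  set G := W1 * W1ᵀ
  have hGsymm : Gᵀ = G := by rw [transpose_mul, transpose_transpose]
  have hGW1 : G * W1 = W2ᵀ := hbal ▸ hfix
  have hW2 : W2 = W1ᵀ * G := by rw [← transpose_transpose W2, ← hGW1, transpose_mul, hGsymm]
  have hG : G * G = G := by
    refine (posSemidef_self_mul_conjTranspose W1).mul_self_eq_self_of_mul_self_mul_self_eq ?_
    calc G * G * G = G * W1 * (W1ᵀ * G) := by simp only [G, Matrix.mul_assoc]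
      _ = G := by rw [hGW1, ← hW2, hbal]
  have hW2W1 : W2ᵀ * W1ᵀ = G := by rw [← hGW1, Matrix.mul_assoc, hG]
  have hW1W2 : W1 * W2 = G := by rw [hW2, ← Matrix.mul_assoc, hG]
  have hzero : (W2ᵀ - W1) * (W2ᵀ - W1)ᴴ = 0 := by
    rw [conjTranspose_eq_transpose_of_trivial, transpose_sub, transpose_transpose,
      Matrix.sub_mul, Matrix.mul_sub, Matrix.mul_sub, hbal, hW2W1, hW1W2, sub_self]
  exact (sub_eq_zero.mp (self_mul_conjTranspose_eq_zero.mp hzero)).symm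

/-- Characterization of the nonzero balanced equilibria of the two-layer linear
autoencoder flow: W₁ = W₂ᵀ, all nonzero singular values of W₂ equal 1 (equivalently
W₂ W₂ᵀ W₂ = W₂), and W₂ = U Vᵀ where the columns of U are orthonormal eigenvectors of
X Xᵀ and V has orthonormal columns; consequently W₂ W₁ = U Uᵀ. -/
theorem stmt19 {dd r m : ℕ}
    (X : Matrix (Fin dd) (Fin m) ℝ) (hX : IsUnit (X * Xᵀ))
    (W1 : Matrix (Fin r) (Fin dd) ℝ) (W2 : Matrix (Fin dd) (Fin r) ℝ)
    (hbal : W2ᵀ * W2 = W1 * W1ᵀ) (hW2 : W2 ≠ 0)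
    (heq1 : W2ᵀ * W2 * W1 * (X * Xᵀ) = W2ᵀ * (X * Xᵀ))
    (heq2 : W2 * W1 * (X * Xᵀ) * W1ᵀ = (X * Xᵀ) * W1ᵀ) :
    W1 = W2ᵀ ∧ W2 * W2ᵀ * W2 = W2 ∧
    ∃ (k : ℕ), 1 ≤ k ∧ k ≤ r ∧
      ∃ (U : Matrix (Fin dd) (Fin k) ℝ) (V : Matrix (Fin r) (Fin k) ℝ) (lam : Fin k → ℝ),
        Uᵀ * U = 1 ∧ Vᵀ * V = 1 ∧ (X * Xᵀ) * U = U * Matrix.diagonal lam ∧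
        W2 = U * Vᵀ ∧ W2 * W1 = U * Uᵀ := by
  let := hX.invertible
  have hfix : W2ᵀ * W2 * W1 = W2ᵀ := (Matrix.mul_left_inj_of_invertible _).mp heq1
  obtain rfl : W1 = W2ᵀ := eq_transpose_of_balanced hbal hfix
  have hproj : W2 * W2ᵀ * W2 = W2 := by
    simpa only [transpose_mul, transpose_transpose, Matrix.mul_assoc] using congrArg transpose hfix
  have hQ : W2 * W2ᵀ * (W2 * W2ᵀ) = W2 * W2ᵀ := by rw [← Matrix.mul_assoc, hproj]
  have hsymm {a b : ℕ} (A : Matrix (Fin a) (Fin b) ℝ) : (A * Aᵀ).IsSymm := by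
    rw [IsSymm, transpose_mul, transpose_transpose]
  have hcomm : Commute (W2 * W2ᵀ) (X * Xᵀ) := by
    refine commute_of_mul_mul_eq_mul (hsymm W2) (hsymm X) ?_
    rw [transpose_transpose] at heq2
    rw [← Matrix.mul_assoc, heq2, Matrix.mul_assoc]
  obtain ⟨k, U, lam, hUU, hSU, hQU⟩ := exists_orthonormal_eigenvectors_of_commute_projection hX
    (hsymm X) (hsymm W2) hQ hcomm
  have hW2UV : W2 = U * (W2ᵀ * U)ᵀ := by
    rw [transpose_mul, transpose_transpose, ← Matrix.mul_assoc, ← hQU, hproj]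
  have hVV : (W2ᵀ * U)ᵀ * (W2ᵀ * U) = 1 := by
    rw [transpose_mul, transpose_transpose, Matrix.mul_assoc, ← Matrix.mul_assoc W2, hQU,
      ← Matrix.mul_assoc, ← Matrix.mul_assoc, hUU, Matrix.one_mul, hUU]
  have hk : 1 ≤ k := Nat.pos_of_ne_zero fun hk0 => hW2 <| by
    subst hk0
    rw [hW2UV]
    ext i j
    simp [mul_apply]
  refine ⟨rfl, hproj, k, hk, by simpa using card_le_card_of_mul_eq_one hVV, U, W2ᵀ * U, lam,
    hUU, hVV, hSU, hW2UV, hQU⟩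
end
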